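/- arXiv:2605.12231 — 2 statements merged into one kernel-verified Lean document; each statement's English description precedes it below -/
import Mathlib

section
/- Assume u_{0,1} and u_{0,2} both satisfy the small-ball assumption with the same constants c, α, r₀, and let λ ∈ ℝ. Then for every x ∈ E and every t with 0 < t ≤ r₀², |Φ_λ(x) − F_λ(x,t)| ≤ (2|λ|·d_{A₁}(x) + 2|1−λ|·d_{A₂}(x))·√t + C₂·t·(1+|log t|), where C₂ = max{1 + 4|log c| + 2d·log(4π), 2α + 2d}·(|λ| + |1−λ|). -/
open MeasureTheory Metric Filter Topology

/-- The heat kernel `G_t(z) = (4πt)^{-d/2} exp(-‖z‖²/(4t))` on `EuclideanSpace ℝ (Fin d)`. -/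
noncomputable def heatKernel (d : ℕ) (t : ℝ) (z : EuclideanSpace ℝ (Fin d)) : ℝ :=
  (4 * Real.pi * t) ^ (-(d : ℝ) / 2) * Real.exp (-‖z‖ ^ 2 / (4 * t))

/-- The heat evolution `u(x,t) = ∫ G_t(x - y) dμ(y)` of a measure `μ`. -/
noncomputable def heatEvolution {d : ℕ} (μ : Measure (EuclideanSpace ℝ (Fin d)))
    (x : EuclideanSpace ℝ (Fin d)) (t : ℝ) : ℝ :=
  ∫ y, heatKernel d t (x - y) ∂μ

/-- The (topological) support of a Borel measure: points all of whose neighborhoods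
have positive measure. -/
def msupport {E : Type*} [TopologicalSpace E] [MeasurableSpace E] (μ : Measure E) : Set E :=
  {x | ∀ U ∈ nhds x, 0 < μ U}

/-- Small-ball assumption: `μ(B(x,r)) ≥ c·r^α` for every `x` in the support of `μ`
and every `r ∈ (0, r₀]`. -/
def SmallBall {d : ℕ} (μ : Measure (EuclideanSpace ℝ (Fin d))) (c α r₀ : ℝ) : Prop :=
  ∀ x ∈ msupport μ, ∀ r : ℝ, 0 < r → r ≤ r₀ →
    ENNReal.ofReal (c * r ^ α) ≤ μ (Metric.closedBall x r)

/-- The geometric distance potential `Φ_λ(x) = λ d_{A₁}(x)² + (1-λ) d_{A₂}(x)²`. -/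
noncomputable def distPotential {d : ℕ} (A₁ A₂ : Set (EuclideanSpace ℝ (Fin d))) (lam : ℝ)
    (x : EuclideanSpace ℝ (Fin d)) : ℝ :=
  lam * (Metric.infDist x A₁) ^ 2 + (1 - lam) * (Metric.infDist x A₂) ^ 2

/-- The rescaled mixed potential `F_λ(x,t) = -4t (λ log u₁(x,t) + (1-λ) log u₂(x,t))`. -/
noncomputable def mixedPotential {d : ℕ} (μ₁ μ₂ : Measure (EuclideanSpace ℝ (Fin d))) (lam : ℝ)
    (x : EuclideanSpace ℝ (Fin d)) (t : ℝ) : ℝ :=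
  -4 * t * (lam * Real.log (heatEvolution μ₁ x t) +
    (1 - lam) * Real.log (heatEvolution μ₂ x t))


/-!
With `G_t(z) = (4πt)^{-d/2} exp(-‖z‖²/(4t))` one has `4t log G_t(z) = -‖z‖² - 2dt log(4πt)`.
Since `μ` is carried by its support `A`, `u(x,t) ≤ G_t` at distance `d_A(x)`. The closed ball of
radius `√t` about a nearest point of `x` in `A` has mass at least `c t^{α/2}` and lies within
distance `d_A(x) + √t` of `x`, so `u(x,t) ≥ c t^{α/2} G_t` at distance `d_A(x) + √t`.
Applying `4t log` traps `d_A(x)² + 4t log u(x,t)` between `-2 d_A(x) √t - O(t (1 + |log t|))`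
and `O(t |log t|)`; the theorem is the `λ`-combination of these bounds for `μ₁` and `μ₂`.
-/

open Real

lemma msupport_eq_support {E : Type*} [TopologicalSpace E] [MeasurableSpace E] (μ : Measure E) :
    msupport μ = μ.support := by
  ext x
  rw [Measure.mem_support_iff_forall]
  rfl

noncomputable def radialHeatKernel (d : ℕ) (t r : ℝ) : ℝ :=
  (4 * π * t) ^ (-(d : ℝ) / 2) * exp (-r ^ 2 / (4 * t))

section HeatKernel

variable {d : ℕ} {t : ℝ}

lemma heatKernel_eq_radialHeatKernel (z : EuclideanSpace ℝ (Fin d)) :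
    heatKernel d t z = radialHeatKernel d t ‖z‖ :=
  rfl

lemma radialHeatKernel_pos (ht : 0 < t) (r : ℝ) : 0 < radialHeatKernel d t r := by
  unfold radialHeatKernel
  positivity

lemma radialHeatKernel_le_radialHeatKernel (ht : 0 < t) {r r' : ℝ} (hr : 0 ≤ r) (h : r ≤ r') :
    radialHeatKernel d t r' ≤ radialHeatKernel d t r := by
  unfold radialHeatKernel
  gcongr

lemma four_mul_log_radialHeatKernel (ht : 0 < t) (r : ℝ) :
    4 * t * log (radialHeatKernel d t r) = -r ^ 2 - 2 * d * t * log (4 * π * t) := by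
  have hπt : 0 < 4 * π * t := by positivity
  rw [radialHeatKernel, log_mul (rpow_pos_of_pos hπt _).ne' (exp_pos _).ne', log_rpow hπt,
    log_exp]
  field_simp
  ring

lemma integrable_heatKernel_sub {μ : Measure (EuclideanSpace ℝ (Fin d))} [IsFiniteMeasure μ]
    (ht : 0 < t) (x : EuclideanSpace ℝ (Fin d)) :
    Integrable (fun y ↦ heatKernel d t (x - y)) μ := by
  have hcont : Continuous fun y ↦ heatKernel d t (x - y) := by unfold heatKernel; fun_prop
  refine .of_bound hcont.aestronglyMeasurable (radialHeatKernel d t 0) (ae_of_all _ fun y ↦ ?_)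
  rw [heatKernel_eq_radialHeatKernel, norm_of_nonneg (radialHeatKernel_pos ht _).le]
  exact radialHeatKernel_le_radialHeatKernel ht le_rfl (norm_nonneg _)

end HeatKernel

section HeatEvolution

variable {d : ℕ} {μ : Measure (EuclideanSpace ℝ (Fin d))} {x : EuclideanSpace ℝ (Fin d)} {t : ℝ}

lemma heatEvolution_pos [IsFiniteMeasure μ] [NeZero μ] (ht : 0 < t) : 0 < heatEvolution μ x t := by
  have hpos : ∀ y, 0 < heatKernel d t (x - y) := fun y ↦ radialHeatKernel_pos ht _
  rw [heatEvolution, integral_pos_iff_support_of_nonneg (fun y ↦ (hpos y).le)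
    (integrable_heatKernel_sub ht x), Function.support_eq_univ fun y ↦ (hpos y).ne']
  exact Measure.measure_univ_pos.mpr (NeZero.ne μ)

lemma heatEvolution_le_radialHeatKernel [IsProbabilityMeasure μ] (ht : 0 < t) {r : ℝ}
    (hr : 0 ≤ r) (h : ∀ᵐ y ∂μ, r ≤ ‖x - y‖) :
    heatEvolution μ x t ≤ radialHeatKernel d t r := by
  calc heatEvolution μ x t ≤ ∫ _, radialHeatKernel d t r ∂μ :=
        integral_mono_ae (integrable_heatKernel_sub ht x) (integrable_const _)
          (h.mono fun y hy ↦ radialHeatKernel_le_radialHeatKernel ht hr hy)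
    _ = radialHeatKernel d t r := by simp

lemma measureReal_mul_radialHeatKernel_le_heatEvolution [IsFiniteMeasure μ] (ht : 0 < t)
    {s : Set (EuclideanSpace ℝ (Fin d))} (hs : MeasurableSet s) {R : ℝ}
    (hR : ∀ y ∈ s, ‖x - y‖ ≤ R) :
    μ.real s * radialHeatKernel d t R ≤ heatEvolution μ x t := by
  have hint := integrable_heatKernel_sub (μ := μ) ht x
  calc μ.real s * radialHeatKernel d t R = radialHeatKernel d t R * μ.real s := mul_comm _ _
    _ ≤ ∫ y in s, heatKernel d t (x - y) ∂μ :=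
        setIntegral_ge_of_const_le_real hs (measure_ne_top μ s)
          (fun y hy ↦ radialHeatKernel_le_radialHeatKernel ht (norm_nonneg _) (hR y hy))
          hint.integrableOn
    _ ≤ heatEvolution μ x t :=
        setIntegral_le_integral hint (ae_of_all _ fun y ↦ (radialHeatKernel_pos ht _).le)

end HeatEvolution

section LogBounds

variable {d : ℕ} {μ : Measure (EuclideanSpace ℝ (Fin d))} [IsProbabilityMeasure μ]
  {x : EuclideanSpace ℝ (Fin d)} {t : ℝ}

lemma sq_infDist_support_add_four_mul_log_heatEvolution_le (ht : 0 < t) :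
    infDist x μ.support ^ 2 + 4 * t * log (heatEvolution μ x t) ≤
      -(2 * d * t * log (4 * π * t)) := by
  have hnear : ∀ᵐ y ∂μ, infDist x μ.support ≤ ‖x - y‖ :=
    Filter.mem_of_superset Measure.support_mem_ae fun y hy ↦ by
      simpa [dist_eq_norm] using infDist_le_dist_of_mem hy
  have hu := heatEvolution_le_radialHeatKernel ht infDist_nonneg hnear
  have hlog := mul_le_mul_of_nonneg_left (log_le_log (heatEvolution_pos ht) hu)
    (by positivity : (0 : ℝ) ≤ 4 * t)
  rw [four_mul_log_radialHeatKernel ht] at hlog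
  linarith

lemma le_sq_infDist_support_add_four_mul_log_heatEvolution {c α r₀ : ℝ}
    (hSB : SmallBall μ c α r₀) (hc : 0 < c) (ht : 0 < t) (htr : √t ≤ r₀) :
    4 * t * log c + 2 * α * t * log t - 2 * infDist x μ.support * √t - t -
        2 * d * t * log (4 * π * t) ≤
      infDist x μ.support ^ 2 + 4 * t * log (heatEvolution μ x t) := by
  obtain ⟨a, ha, hxa⟩ :=
    Measure.isClosed_support.exists_infDist_eq_dist (Measure.nonempty_support (NeZero.ne μ)) x
  set D := infDist x μ.support
  set s := √t
  have hs : 0 < s := sqrt_pos.mpr ht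
  have hball : c * s ^ α ≤ μ.real (closedBall a s) := by
    have := hSB a (by rwa [msupport_eq_support]) s hs htr
    rwa [← ENNReal.ofReal_toReal (measure_ne_top μ _), ENNReal.ofReal_le_ofReal_iff
      ENNReal.toReal_nonneg] at this
  have hclose : ∀ y ∈ closedBall a s, ‖x - y‖ ≤ D + s := fun y hy ↦ by
    rw [← dist_eq_norm, hxa]
    exact (dist_triangle x a y).trans (add_le_add_right (mem_closedBall'.mp hy) _)
  have hu := (mul_le_mul_of_nonneg_right hball (radialHeatKernel_pos ht _).le).trans
    (measureReal_mul_radialHeatKernel_le_heatEvolution ht measurableSet_closedBall hclose)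
  have hlog := mul_le_mul_of_nonneg_left
    (log_le_log (mul_pos (by positivity) (radialHeatKernel_pos ht _)) hu)
    (by positivity : (0 : ℝ) ≤ 4 * t)
  rw [log_mul (by positivity) (radialHeatKernel_pos ht _).ne', log_mul hc.ne' (by positivity),
    log_rpow hs, log_sqrt ht.le, mul_add, mul_add, four_mul_log_radialHeatKernel ht] at hlog
  have hsq : (D + s) ^ 2 = D ^ 2 + 2 * D * s + t := by rw [add_sq, sq_sqrt ht.le]
  linarith

end LogBounds

lemma abs_sq_infDist_support_add_four_mul_log_heatEvolution_le {d : ℕ}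
    {μ : Measure (EuclideanSpace ℝ (Fin d))} [IsProbabilityMeasure μ]
    {x : EuclideanSpace ℝ (Fin d)} {t c α r₀ : ℝ} (hSB : SmallBall μ c α r₀) (hc : 0 < c)
    (hα : 0 ≤ α) (ht : 0 < t) (htr : √t ≤ r₀) :
    |infDist x μ.support ^ 2 + 4 * t * log (heatEvolution μ x t)| ≤
      2 * infDist x μ.support * √t +
        max (1 + 4 * |log c| + 2 * d * log (4 * π)) (2 * α + 2 * d) * (t * (1 + |log t|)) := by
  have hupper := sq_infDist_support_add_four_mul_log_heatEvolution_le (μ := μ) (x := x) ht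
  have hlower := le_sq_infDist_support_add_four_mul_log_heatEvolution (x := x) hSB hc ht htr
  rw [log_mul (by positivity) ht.ne'] at hupper hlower
  have hDs : 0 ≤ infDist x μ.support * √t := mul_nonneg infDist_nonneg (sqrt_nonneg t)
  have hlogπ : 0 ≤ d * t * log (4 * π) :=
    mul_nonneg (by positivity) (log_nonneg (by linarith [pi_gt_three]))
  have hlogc : t * -|log c| ≤ t * log c := mul_le_mul_of_nonneg_left (neg_abs_le _) ht.le
  have hαt : 0 ≤ α * t := mul_nonneg hα ht.le
  have hdt : (0 : ℝ) ≤ d * t := by positivity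
  have hlogt₁ := mul_le_mul_of_nonneg_left (neg_abs_le (log t)) hαt
  have hlogt₂ := mul_le_mul_of_nonneg_left (neg_abs_le (log t)) hdt
  have hlogt₃ := mul_le_mul_of_nonneg_left (le_abs_self (log t)) hdt
  have hC₁ := mul_le_mul_of_nonneg_left
    (le_max_left (1 + 4 * |log c| + 2 * d * log (4 * π)) (2 * α + 2 * d)) ht.le
  have hC₂ := mul_le_mul_of_nonneg_left
    (le_max_right (1 + 4 * |log c| + 2 * d * log (4 * π)) (2 * α + 2 * d))
    (mul_nonneg ht.le (abs_nonneg (log t)))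
  rw [abs_le]
  constructor <;> linarith

theorem laplace_varadhan_value_convergence_general
    (d : ℕ)
    (μ₁ μ₂ : Measure (EuclideanSpace ℝ (Fin d)))
    [IsProbabilityMeasure μ₁] [IsProbabilityMeasure μ₂]
    (A₁ A₂ : Set (EuclideanSpace ℝ (Fin d)))
    (hA₁ : A₁ = msupport μ₁) (hA₂ : A₂ = msupport μ₂)
    (c α r₀ : ℝ) (hc : 0 < c) (hα : 0 ≤ α) (hr₀ : 0 < r₀)
    (hSB₁ : SmallBall μ₁ c α r₀) (hSB₂ : SmallBall μ₂ c α r₀)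
    (lam : ℝ)
    (x : EuclideanSpace ℝ (Fin d)) (t : ℝ) (ht : 0 < t) (ht' : t ≤ r₀ ^ 2) :
    |distPotential A₁ A₂ lam x - mixedPotential μ₁ μ₂ lam x t| ≤
      (2 * |lam| * Metric.infDist x A₁ + 2 * |1 - lam| * Metric.infDist x A₂) * Real.sqrt t +
        (max (1 + 4 * |Real.log c| + 2 * d * Real.log (4 * Real.pi)) (2 * α + 2 * d) *
          (|lam| + |1 - lam|)) * (t * (1 + |Real.log t|)) := by
  have htr : √t ≤ r₀ := (sqrt_le_sqrt ht').trans_eq (sqrt_sq hr₀.le)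
  rw [msupport_eq_support] at hA₁ hA₂
  subst hA₁ hA₂
  have h₁ := abs_sq_infDist_support_add_four_mul_log_heatEvolution_le (x := x) hSB₁ hc hα ht htr
  have h₂ := abs_sq_infDist_support_add_four_mul_log_heatEvolution_le (x := x) hSB₂ hc hα ht htr
  calc _ = |lam * (infDist x μ₁.support ^ 2 + 4 * t * log (heatEvolution μ₁ x t)) +
          (1 - lam) * (infDist x μ₂.support ^ 2 + 4 * t * log (heatEvolution μ₂ x t))| := by
        rw [distPotential, mixedPotential]
        ring_nf
    _ ≤ |lam| * |infDist x μ₁.support ^ 2 + 4 * t * log (heatEvolution μ₁ x t)| +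
          |1 - lam| * |infDist x μ₂.support ^ 2 + 4 * t * log (heatEvolution μ₂ x t)| := by
        rw [← abs_mul, ← abs_mul]
        exact abs_add_le _ _
    _ ≤ _ := by
        grw [h₁, h₂]
        exact le_of_eq (by ring)

theorem laplace_varadhan_value_convergence
    (d : ℕ) (hd : 1 ≤ d)
    (μ₁ μ₂ : Measure (EuclideanSpace ℝ (Fin d)))
    [IsProbabilityMeasure μ₁] [IsProbabilityMeasure μ₂]
    (A₁ A₂ : Set (EuclideanSpace ℝ (Fin d)))
    (hA₁ : A₁ = msupport μ₁) (hA₂ : A₂ = msupport μ₂)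
    (hA₁cpt : IsCompact A₁) (hA₂cpt : IsCompact A₂)
    (c α r₀ : ℝ) (hc : 0 < c) (hα : 0 ≤ α) (hr₀ : 0 < r₀)
    (hSB₁ : SmallBall μ₁ c α r₀) (hSB₂ : SmallBall μ₂ c α r₀)
    (lam : ℝ)
    (x : EuclideanSpace ℝ (Fin d)) (t : ℝ) (ht : 0 < t) (ht' : t ≤ r₀ ^ 2) :
    |distPotential A₁ A₂ lam x - mixedPotential μ₁ μ₂ lam x t| ≤
      (2 * |lam| * Metric.infDist x A₁ + 2 * |1 - lam| * Metric.infDist x A₂) * Real.sqrt t +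
        (max (1 + 4 * |Real.log c| + 2 * d * Real.log (4 * Real.pi)) (2 * α + 2 * d) *
          (|lam| + |1 - lam|)) * (t * (1 + |Real.log t|)) :=
  laplace_varadhan_value_convergence_general d μ₁ μ₂ A₁ A₂ hA₁ hA₂ c α r₀ hc hα hr₀ hSB₁ hSB₂ lam x
    t ht ht'
end

section
/- Let A₁, A₂ ⊆ E be nonempty finite sets, let 0 < λ < 1, and let x* ∈ E be a local minimizer of Φ_λ. Then x* has a unique nearest point in A₁ and a unique nearest point in A₂, i.e., Π_{A₁}(x*) and Π_{A₂}(x*) are singletons. -/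
open MeasureTheory Metric Filter Topology

/-- The set `Π_A(x)` of nearest points of `x` in `A`. -/
def nearestPts {d : ℕ} (A : Set (EuclideanSpace ℝ (Fin d)))
    (x : EuclideanSpace ℝ (Fin d)) : Set (EuclideanSpace ℝ (Fin d)) :=
  {a ∈ A | ‖x - a‖ = Metric.infDist x A}

/-!
If `a ≠ b` are nearest points of `x` in `A₁` and `v = b - a`, then comparing `d_{A₁}(x + t v)`
with the distance to `b` and `d_{A₁}(x - t v)` with the distance to `a`, the first-order terms add
up to `-2 t ‖v‖²`. Since `d_{A₂}² - ‖·‖²` is concave, `d_{A₂}²` contributes only `2 t² ‖v‖²` to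
the symmetric second difference. Hence `Φ_λ(x + t v) + Φ_λ(x - t v) < 2 Φ_λ(x)` for small `t > 0`,
which is impossible at a local minimiser. Compactness gives existence of nearest points.
-/

theorem IsLocalMin.eventually_two_mul_le_add {E : Type*} [TopologicalSpace E] [AddCommGroup E]
    [Module ℝ E] [IsTopologicalAddGroup E] [ContinuousSMul ℝ E] {f : E → ℝ} {x : E}
    (hmin : IsLocalMin f x) (v : E) :
    ∀ᶠ t in 𝓝 (0 : ℝ), 2 * f x ≤ f (x + t • v) + f (x - t • v) := by
  have hp : Tendsto (fun t : ℝ => x + t • v) (𝓝 0) (𝓝 x) :=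
    (by fun_prop : Continuous fun t : ℝ => x + t • v).tendsto' 0 x (by simp)
  have hm : Tendsto (fun t : ℝ => x - t • v) (𝓝 0) (𝓝 x) :=
    (by fun_prop : Continuous fun t : ℝ => x - t • v).tendsto' 0 x (by simp)
  filter_upwards [hp.eventually hmin, hm.eventually hmin] with t h₁ h₂
  linarith

section NearestPoints

variable {E : Type*} [NormedAddCommGroup E]

theorem infDist_sq_le_norm_sub_sq {A : Set E} {a : E} (ha : a ∈ A) (y : E) :
    infDist y A ^ 2 ≤ ‖y - a‖ ^ 2 := by
  rw [← dist_eq_norm]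
  exact pow_le_pow_left₀ infDist_nonneg (infDist_le_dist_of_mem ha) 2

variable [InnerProductSpace ℝ E]

/-- Midpoint form of the concavity of `d_A² - ‖·‖²`, an infimum of the affine maps
`y ↦ ‖a‖² - 2⟪y, a⟫`. -/
theorem infDist_sq_add_infDist_sq_le (A : Set E) (x w : E) :
    infDist (x + w) A ^ 2 + infDist (x - w) A ^ 2 ≤ 2 * infDist x A ^ 2 + 2 * ‖w‖ ^ 2 := by
  rcases A.eq_empty_or_nonempty with rfl | hA
  · simp only [infDist_empty]; nlinarith [sq_nonneg ‖w‖]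
  have hr : √((infDist (x + w) A ^ 2 + infDist (x - w) A ^ 2 - 2 * ‖w‖ ^ 2) / 2) ≤
      infDist x A := by
    refine (le_infDist hA).2 fun c hc => (Real.sqrt_le_left dist_nonneg).2 ?_
    have hp := infDist_sq_le_norm_sub_sq hc (x + w)
    have hm := infDist_sq_le_norm_sub_sq hc (x - w)
    rw [show x + w - c = x - c + w by abel, norm_add_sq_real] at hp
    rw [show x - w - c = x - c - w by abel, norm_sub_sq_real] at hm
    rw [dist_eq_norm]
    linarith
  linarith [(Real.sqrt_le_left infDist_nonneg).1 hr]

theorem infDist_sq_add_infDist_sq_le_of_nearest {A : Set E} {x a b : E} (ha : a ∈ A)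
    (hb : b ∈ A) (hxa : ‖x - a‖ = infDist x A) (hxb : ‖x - b‖ = infDist x A) (t : ℝ) :
    infDist (x + t • (b - a)) A ^ 2 + infDist (x - t • (b - a)) A ^ 2 ≤
      2 * infDist x A ^ 2 - 2 * t * ‖b - a‖ ^ 2 + 2 * t ^ 2 * ‖b - a‖ ^ 2 := by
  have hp := infDist_sq_le_norm_sub_sq hb (x + t • (b - a))
  have hm := infDist_sq_le_norm_sub_sq ha (x - t • (b - a))
  rw [show x + t • (b - a) - b = x - b + t • (b - a) by abel, norm_add_sq_real] at hp
  rw [show x - t • (b - a) - a = x - a - t • (b - a) by abel, norm_sub_sq_real] at hm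
  have hinner : t * inner ℝ (x - b) (b - a) - t * inner ℝ (x - a) (b - a) =
      -t * ‖b - a‖ ^ 2 := by
    rw [← mul_sub, ← inner_sub_left, show x - b - (x - a) = -(b - a) by abel, inner_neg_left,
      real_inner_self_eq_norm_sq]
    ring
  simp only [inner_smul_right, norm_smul, mul_pow, Real.norm_eq_abs, sq_abs, hxa, hxb] at hp hm
  linarith

theorem eq_of_isLocalMin_of_nearest {A B : Set E} {μ ν : ℝ} (hμ : 0 < μ) (hν : 0 ≤ ν)
    {x a b : E} (hmin : IsLocalMin (fun y => μ * infDist y A ^ 2 + ν * infDist y B ^ 2) x)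
    (ha : a ∈ A) (hb : b ∈ A) (hxa : ‖x - a‖ = infDist x A) (hxb : ‖x - b‖ = infDist x A) :
    a = b := by
  have hsmall : ∀ᶠ t in 𝓝 (0 : ℝ), t < μ / (μ + ν) := eventually_lt_nhds (by positivity)
  obtain ⟨t, ⟨hmid, htμ⟩, ht₀⟩ :=
    (((hmin.eventually_two_mul_le_add (b - a)).and hsmall).filter_mono nhdsWithin_le_nhds
      |>.and (self_mem_nhdsWithin : ∀ᶠ t in 𝓝[>] (0 : ℝ), t ∈ Set.Ioi 0)).exists
  rw [lt_div_iff₀ (by positivity)] at htμ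
  have hA := infDist_sq_add_infDist_sq_le_of_nearest ha hb hxa hxb t
  have hB := infDist_sq_add_infDist_sq_le B x (t • (b - a))
  rw [norm_smul, mul_pow, Real.norm_eq_abs, sq_abs] at hB
  have hneg : ‖b - a‖ ^ 2 * (t * (μ - t * (μ + ν))) ≤ 0 := by
    nlinarith [mul_le_mul_of_nonneg_left hA hμ.le, mul_le_mul_of_nonneg_left hB hν]
  have hnorm : ‖b - a‖ ^ 2 ≤ 0 :=
    nonpos_of_mul_nonpos_left hneg (mul_pos ht₀ (by linarith))
  have hv : ‖b - a‖ = 0 := by nlinarith [norm_nonneg (b - a)]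
  exact (sub_eq_zero.1 (norm_eq_zero.1 hv)).symm

end NearestPoints

theorem nearestPts_nonempty {d : ℕ} {A : Set (EuclideanSpace ℝ (Fin d))} (hA : IsCompact A)
    (hne : A.Nonempty) (x : EuclideanSpace ℝ (Fin d)) : (nearestPts A x).Nonempty := by
  obtain ⟨a, ha, hxa⟩ := hA.exists_infDist_eq_dist hne x
  exact ⟨a, ha, by rw [hxa, dist_eq_norm]⟩

theorem nearestPts_subsingleton_of_isLocalMin {d : ℕ} {A B : Set (EuclideanSpace ℝ (Fin d))}
    {μ ν : ℝ} (hμ : 0 < μ) (hν : 0 ≤ ν) {x : EuclideanSpace ℝ (Fin d)}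
    (hmin : IsLocalMin (fun y => μ * infDist y A ^ 2 + ν * infDist y B ^ 2) x) :
    (nearestPts A x).Subsingleton :=
  fun _ ha _ hb => eq_of_isLocalMin_of_nearest hμ hν hmin ha.1 hb.1 ha.2 hb.2

theorem local_minimizers_have_unique_nearest_points_general
    (d : ℕ)
    (A₁ A₂ : Set (EuclideanSpace ℝ (Fin d)))
    (hA₁ : A₁.Nonempty) (hA₂ : A₂.Nonempty)
    (hA₁fin : A₁.Finite) (hA₂fin : A₂.Finite)
    (lam : ℝ) (hlam₀ : 0 < lam) (hlam₁ : lam < 1)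
    (xstar : EuclideanSpace ℝ (Fin d))
    (hmin : IsLocalMin (distPotential A₁ A₂ lam) xstar) :
    (∃ a₁, nearestPts A₁ xstar = {a₁}) ∧ (∃ a₂, nearestPts A₂ xstar = {a₂}) := by
  have hmin' : IsLocalMin (fun y => (1 - lam) * infDist y A₂ ^ 2 + lam * infDist y A₁ ^ 2)
      xstar := by
    convert hmin using 1
    exact funext fun y => add_comm _ _
  simp only [Set.exists_eq_singleton_iff_nonempty_subsingleton]
  exact ⟨⟨nearestPts_nonempty hA₁fin.isCompact hA₁ xstar,
      nearestPts_subsingleton_of_isLocalMin hlam₀ (by linarith) hmin⟩,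
    ⟨nearestPts_nonempty hA₂fin.isCompact hA₂ xstar,
      nearestPts_subsingleton_of_isLocalMin (by linarith) hlam₀.le hmin'⟩⟩

theorem local_minimizers_have_unique_nearest_points
    (d : ℕ) (hd : 1 ≤ d)
    (A₁ A₂ : Set (EuclideanSpace ℝ (Fin d)))
    (hA₁ : A₁.Nonempty) (hA₂ : A₂.Nonempty)
    (hA₁fin : A₁.Finite) (hA₂fin : A₂.Finite)
    (lam : ℝ) (hlam₀ : 0 < lam) (hlam₁ : lam < 1)
    (xstar : EuclideanSpace ℝ (Fin d))
    (hmin : IsLocalMin (distPotential A₁ A₂ lam) xstar) :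
    (∃ a₁, nearestPts A₁ xstar = {a₁}) ∧ (∃ a₂, nearestPts A₂ xstar = {a₂}) :=
  local_minimizers_have_unique_nearest_points_general d A₁ A₂ hA₁ hA₂ hA₁fin hA₂fin lam hlam₀ hlam₁
    xstar hmin
end
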